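/- The lower limit of g'(y)/y as y → +∞ equals −1/π, i.e. liminf_{y→+∞} g'(y)/y = −1/π. -/

import Mathlib

open Real Filter
open Topology

/-- The partition points of Example 2.6: `t 0 = 0`,
`t (2ℓ+1) = t (2ℓ) + π/(ℓ+1)`, `t (2ℓ+2) = t (2ℓ+1) + π`. -/
noncomputable def tseq : ℕ → ℝ
  | 0 => 0
  | k + 1 => tseq k + (if k % 2 = 0 then Real.pi / ((k / 2 + 1 : ℕ) : ℝ) else Real.pi)

lemma tseq_even (ℓ : ℕ) : tseq (2 * ℓ + 1) = tseq (2 * ℓ) + Real.pi / (ℓ + 1) := by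
  show tseq (2 * ℓ) + _ = _
  simp [Nat.mul_mod_right, Nat.mul_div_cancel_left]

lemma tseq_odd (ℓ : ℕ) : tseq (2 * ℓ + 2) = tseq (2 * ℓ + 1) + Real.pi := by
  show tseq (2 * ℓ + 1) + _ = _
  have : (2 * ℓ + 1) % 2 = 1 := by omega
  simp [this]

lemma tseq_formula (ℓ : ℕ) :
    tseq (2 * ℓ) = Real.pi * ℓ + Real.pi * (harmonic ℓ : ℝ) := by
  induction ℓ with
  | zero => simp [tseq]
  | succ n ih =>
      have h1 : 2 * (n + 1) = 2 * n + 2 := by ring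
      rw [h1, tseq_odd, tseq_even, ih, harmonic_succ]
      push_cast
      field_simp
      ring

lemma tseq_lt_succ (k : ℕ) : tseq k < tseq (k + 1) := by
  have h : tseq (k+1) = tseq k + _ := rfl
  rw [h]
  have hπ := Real.pi_pos
  split
  · have : (0:ℝ) < ((k / 2 + 1 : ℕ) : ℝ) := by positivity
    nlinarith [div_pos hπ this]
  · linarith

lemma tseq_mono : StrictMono tseq := strictMono_nat_of_lt_succ tseq_lt_succ

lemma tseq_nonneg (k : ℕ) : 0 ≤ tseq k := by
  have : tseq 0 ≤ tseq k := tseq_mono.monotone (Nat.zero_le k)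
  simpa [tseq] using this

lemma one_le_harmonic (ℓ : ℕ) (h : 1 ≤ ℓ) : (1:ℚ) ≤ harmonic ℓ := by
  induction ℓ with
  | zero => omega
  | succ n ih =>
      rcases Nat.eq_zero_or_pos n with h0 | h1
      · subst h0; simp [harmonic_succ]
      · have := ih h1
        have : (0:ℚ) < (↑(n+1):ℚ)⁻¹ := by positivity
        rw [harmonic_succ]
        linarith [ih h1]

lemma tseq_ge (ℓ : ℕ) (h : 1 ≤ ℓ) : Real.pi * (ℓ + 1) ≤ tseq (2 * ℓ) := by
  rw [tseq_formula]
  have h1 : (1:ℝ) ≤ (harmonic ℓ : ℝ) := by exact_mod_cast one_le_harmonic ℓ h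
  nlinarith [Real.pi_pos]

lemma tseq_two : tseq 2 = 2 * Real.pi := by
  have h2 : tseq 2 = tseq (2*0+2) := by norm_num
  rw [h2, tseq_odd, show 2*0+1 = 2*0+1 from rfl, tseq_even]
  simp [tseq]
  ring

lemma exists_interval (y : ℝ) (hy : 0 ≤ y) : ∃ k, tseq k ≤ y ∧ y < tseq (k + 1) := by
  have hex : ∃ n, y < tseq n := by
    obtain ⟨ℓ, hℓ⟩ := exists_nat_gt (y / Real.pi)
    refine ⟨2 * (ℓ+1), lt_of_lt_of_le ?_ (tseq_ge (ℓ+1) le_add_self)⟩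
    have hπ := Real.pi_pos
    have := (div_lt_iff₀ hπ).mp hℓ
    push_cast
    nlinarith
  classical
  let n := Nat.find hex
  have hn : y < tseq n := Nat.find_spec hex
  have hn0 : n ≠ 0 := by
    intro h
    rw [h] at hn
    simp [tseq] at hn
    linarith
  obtain ⟨m, hm⟩ := Nat.exists_eq_succ_of_ne_zero hn0
  refine ⟨m, ?_, by rw [show m + 1 = n from hm.symm]; exact hn⟩
  by_contra hcon
  exact Nat.find_min hex (by omega : m < n) (lt_of_not_ge hcon)

lemma hasDerivAt_evenPiece (c a : ℝ) (y : ℝ) :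
    HasDerivAt (fun z => Real.cos (c * (z - a))) (-(c * Real.sin (c * (y - a)))) y := by
  have h1 : HasDerivAt (fun z : ℝ => c * (z - a)) c y := by
    simpa using ((hasDerivAt_id y).sub_const a).const_mul c
  have := (Real.hasDerivAt_cos (c * (y - a))).comp y h1
  exact this.congr_deriv (by ring)

lemma hasDerivAt_oddPiece (b : ℝ) (y : ℝ) :
    HasDerivAt (fun z => Real.cos (z - b + Real.pi)) (-Real.sin (y - b + Real.pi)) y := by
  have h1 : HasDerivAt (fun z : ℝ => z - b + Real.pi) 1 y := by
    simpa using ((hasDerivAt_id y).sub_const b).add_const Real.pi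
  have := (Real.hasDerivAt_cos (y - b + Real.pi)).comp y h1
  exact this.congr_deriv (by ring)

lemma interior_even (g : ℝ → ℝ)
    (heven : ∀ (ℓ : ℕ), ∀ y ∈ Set.Ico (tseq (2 * ℓ)) (tseq (2 * ℓ + 1)),
      g y = Real.cos (((ℓ : ℝ) + 1) * (y - tseq (2 * ℓ))))
    (ℓ : ℕ) {y : ℝ} (h : y ∈ Set.Ioo (tseq (2 * ℓ)) (tseq (2 * ℓ + 1))) :
    HasDerivAt g (-((((ℓ:ℝ) + 1)) * Real.sin (((ℓ:ℝ) + 1) * (y - tseq (2 * ℓ))))) y := by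
  refine (hasDerivAt_evenPiece ((ℓ:ℝ) + 1) (tseq (2 * ℓ)) y).congr_of_eventuallyEq ?_
  filter_upwards [isOpen_Ioo.mem_nhds h] with z hz
  exact heven ℓ z ⟨hz.1.le, hz.2⟩

lemma interior_odd (g : ℝ → ℝ)
    (hodd : ∀ (ℓ : ℕ), ∀ y ∈ Set.Ico (tseq (2 * ℓ + 1)) (tseq (2 * ℓ + 2)),
      g y = Real.cos (y - tseq (2 * ℓ + 1) + Real.pi))
    (ℓ : ℕ) {y : ℝ} (h : y ∈ Set.Ioo (tseq (2 * ℓ + 1)) (tseq (2 * ℓ + 2))) :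
    HasDerivAt g (-Real.sin (y - tseq (2 * ℓ + 1) + Real.pi)) y := by
  refine (hasDerivAt_oddPiece (tseq (2 * ℓ + 1)) y).congr_of_eventuallyEq ?_
  filter_upwards [isOpen_Ioo.mem_nhds h] with z hz
  exact hodd ℓ z ⟨hz.1.le, hz.2⟩

lemma junction_odd (g : ℝ → ℝ)
    (heven : ∀ (ℓ : ℕ), ∀ y ∈ Set.Ico (tseq (2 * ℓ)) (tseq (2 * ℓ + 1)),
      g y = Real.cos (((ℓ : ℝ) + 1) * (y - tseq (2 * ℓ))))
    (hodd : ∀ (ℓ : ℕ), ∀ y ∈ Set.Ico (tseq (2 * ℓ + 1)) (tseq (2 * ℓ + 2)),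
      g y = Real.cos (y - tseq (2 * ℓ + 1) + Real.pi))
    (ℓ : ℕ) : HasDerivAt g 0 (tseq (2 * ℓ + 1)) := by
  set a := tseq (2 * ℓ) with ha
  set t := tseq (2 * ℓ + 1) with htdef
  have hat : a < t := tseq_lt_succ _
  have htb : t < tseq (2 * ℓ + 2) := tseq_lt_succ _
  have harg : ((ℓ:ℝ) + 1) * (t - a) = Real.pi := by
    rw [htdef, ha, tseq_even]
    have : ((ℓ:ℝ) + 1) ≠ 0 := by positivity
    field_simp
    ring
  have hgt : g t = -1 := by
    rw [hodd ℓ t ⟨le_refl t, htb⟩]; simp [htdef]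
  have hL : HasDerivWithinAt g 0 (Set.Iic t) t := by
    have hd := hasDerivAt_evenPiece ((ℓ:ℝ) + 1) a t
    rw [harg, Real.sin_pi, mul_zero, neg_zero] at hd
    refine hd.hasDerivWithinAt.congr_of_eventuallyEq ?_ ?_
    · filter_upwards [mem_nhdsWithin_of_mem_nhds (Ioi_mem_nhds hat),
        self_mem_nhdsWithin] with z hz1 hz2
      rcases lt_or_eq_of_le (Set.mem_Iic.mp hz2) with h | h
      · exact heven ℓ z ⟨le_of_lt hz1, h⟩
      · subst h; rw [harg, Real.cos_pi, hgt]
    · rw [harg, Real.cos_pi, hgt]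
  have hR : HasDerivWithinAt g 0 (Set.Ici t) t := by
    have hd := hasDerivAt_oddPiece t t
    have h0 : t - t + Real.pi = Real.pi := by ring
    rw [h0, Real.sin_pi, neg_zero] at hd
    refine hd.hasDerivWithinAt.congr_of_eventuallyEq ?_ ?_
    · filter_upwards [mem_nhdsWithin_of_mem_nhds (Iio_mem_nhds htb),
        self_mem_nhdsWithin] with z hz1 hz2
      exact hodd ℓ z ⟨hz2, hz1⟩
    · exact hodd ℓ t ⟨le_refl t, htb⟩
  have := hL.union hR
  rwa [Set.Iic_union_Ici, hasDerivWithinAt_univ] at this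

lemma junction_even (g : ℝ → ℝ)
    (heven : ∀ (ℓ : ℕ), ∀ y ∈ Set.Ico (tseq (2 * ℓ)) (tseq (2 * ℓ + 1)),
      g y = Real.cos (((ℓ : ℝ) + 1) * (y - tseq (2 * ℓ))))
    (hodd : ∀ (ℓ : ℕ), ∀ y ∈ Set.Ico (tseq (2 * ℓ + 1)) (tseq (2 * ℓ + 2)),
      g y = Real.cos (y - tseq (2 * ℓ + 1) + Real.pi))
    (ℓ : ℕ) : HasDerivAt g 0 (tseq (2 * ℓ + 2)) := by
  have hidx : 2 * (ℓ + 1) = 2 * ℓ + 2 := by ring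
  have heven' := heven (ℓ + 1)
  rw [hidx] at heven'
  set b := tseq (2 * ℓ + 1) with hb
  set t := tseq (2 * ℓ + 2) with htdef
  have hbt : b < t := tseq_lt_succ _
  have htc : t < tseq (2 * ℓ + 2 + 1) := tseq_lt_succ _
  have harg : t - b + Real.pi = 2 * Real.pi := by
    rw [htdef, hb, tseq_odd]; ring
  have hgt : g t = 1 := by
    rw [heven' t ⟨le_refl t, htc⟩]; simp
  have hL : HasDerivWithinAt g 0 (Set.Iic t) t := by
    have hd := hasDerivAt_oddPiece b t
    rw [harg, Real.sin_two_pi, neg_zero] at hd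
    refine hd.hasDerivWithinAt.congr_of_eventuallyEq ?_ ?_
    · filter_upwards [mem_nhdsWithin_of_mem_nhds (Ioi_mem_nhds hbt),
        self_mem_nhdsWithin] with z hz1 hz2
      rcases lt_or_eq_of_le (Set.mem_Iic.mp hz2) with h | h
      · exact hodd ℓ z ⟨le_of_lt hz1, h⟩
      · subst h; rw [harg, Real.cos_two_pi, hgt]
    · rw [harg, Real.cos_two_pi, hgt]
  have hR : HasDerivWithinAt g 0 (Set.Ici t) t := by
    have hd := hasDerivAt_evenPiece (((ℓ:ℝ) + 1) + 1) t t
    have h0 : (((ℓ:ℝ) + 1) + 1) * (t - t) = 0 := by ring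
    rw [h0, Real.sin_zero, mul_zero, neg_zero] at hd
    refine hd.hasDerivWithinAt.congr_of_eventuallyEq ?_ ?_
    · filter_upwards [mem_nhdsWithin_of_mem_nhds (Iio_mem_nhds htc),
        self_mem_nhdsWithin] with z hz1 hz2
      have := heven' z ⟨hz2, hz1⟩
      rw [this]
      push_cast
      ring_nf
    · have := heven' t ⟨le_refl t, htc⟩
      rw [this]
      push_cast
      ring_nf
  have := hL.union hR
  rwa [Set.Iic_union_Ici, hasDerivWithinAt_univ] at this

lemma harmonic_nonneg' (n : ℕ) : (0:ℝ) ≤ (harmonic n : ℝ) := by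
  have : (0:ℚ) ≤ harmonic n := by unfold harmonic; positivity
  exact_mod_cast this

lemma div_lb {d y c : ℝ} (hc : 0 < c) (hd : -c ≤ d) (hy : Real.pi * c ≤ y) :
    -(1 / Real.pi) ≤ d / y := by
  have hπ := Real.pi_pos
  have hy0 : 0 < y := lt_of_lt_of_le (by positivity) hy
  rw [le_div_iff₀ hy0]
  have h1 : (1 / Real.pi) * (Real.pi * c) ≤ (1 / Real.pi) * y :=
    mul_le_mul_of_nonneg_left hy (by positivity)
  have h2 : (1 / Real.pi) * (Real.pi * c) = c := by field_simp
  nlinarith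

lemma lower_bound (g : ℝ → ℝ)
    (heven : ∀ (ℓ : ℕ), ∀ y ∈ Set.Ico (tseq (2 * ℓ)) (tseq (2 * ℓ + 1)),
      g y = Real.cos (((ℓ : ℝ) + 1) * (y - tseq (2 * ℓ))))
    (hodd : ∀ (ℓ : ℕ), ∀ y ∈ Set.Ico (tseq (2 * ℓ + 1)) (tseq (2 * ℓ + 2)),
      g y = Real.cos (y - tseq (2 * ℓ + 1) + Real.pi)) :
    ∀ y : ℝ, tseq 2 ≤ y → -(1 / Real.pi) ≤ deriv g y / y := by
  intro y hy
  have hπ := Real.pi_pos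
  have h2π : tseq 2 = 2 * Real.pi := tseq_two
  have hy0 : 0 < y := by rw [h2π] at hy; linarith
  obtain ⟨k, hk1, hk2⟩ := exists_interval y hy0.le
  have hk2' : tseq 2 < tseq (k + 1) := lt_of_le_of_lt hy hk2
  have hkge : 2 ≤ k := by have := tseq_mono.lt_iff_lt.mp hk2'; omega
  have hzero : -(1 / Real.pi) ≤ 0 := by
    have : 0 < 1 / Real.pi := by positivity
    linarith
  rcases Nat.even_or_odd k with he | ho
  · obtain ⟨m, hm⟩ := he
    have hk : k = 2 * m := by omega
    subst hk
    have hℓ1 : 1 ≤ m := by omega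
    rcases eq_or_lt_of_le hk1 with h | h
    · have hidx : 2 * m = 2 * (m - 1) + 2 := by omega
      have hdg : deriv g y = 0 := by
        rw [← h, hidx]; exact (junction_even g heven hodd (m - 1)).deriv
      rw [hdg, zero_div]; exact hzero
    · have hmem : y ∈ Set.Ioo (tseq (2 * m)) (tseq (2 * m + 1)) := ⟨h, hk2⟩
      have hd := interior_even g heven m hmem
      rw [hd.deriv]
      refine div_lb (by positivity : (0:ℝ) < (m:ℝ) + 1) ?_ ?_
      · have hs := Real.sin_le_one (((m:ℝ) + 1) * (y - tseq (2 * m)))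
        nlinarith [(show (0:ℝ) ≤ (m:ℝ) + 1 by positivity)]
      · exact le_trans (tseq_ge m hℓ1) hk1
  · obtain ⟨m, hm⟩ := ho
    subst hm
    rcases eq_or_lt_of_le hk1 with h | h
    · have hdg : deriv g y = 0 := by
        rw [← h]; exact (junction_odd g heven hodd m).deriv
      rw [hdg, zero_div]; exact hzero
    · have hmem : y ∈ Set.Ioo (tseq (2 * m + 1)) (tseq (2 * m + 2)) := ⟨h, hk2⟩
      have hd := interior_odd g hodd m hmem
      rw [hd.deriv]
      refine div_lb one_pos ?_ ?_
      · have hs := Real.sin_le_one (y - tseq (2 * m + 1) + Real.pi)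
        linarith
      · rw [mul_one]; rw [h2π] at hy; linarith

noncomputable def yseq (ℓ : ℕ) : ℝ := tseq (2 * ℓ) + Real.pi / (2 * ((ℓ:ℝ) + 1))

lemma yseq_mem (ℓ : ℕ) : yseq ℓ ∈ Set.Ioo (tseq (2 * ℓ)) (tseq (2 * ℓ + 1)) := by
  have hπ := Real.pi_pos
  constructor
  · have : 0 < Real.pi / (2 * ((ℓ:ℝ) + 1)) := by positivity
    simp only [yseq]; linarith
  · rw [tseq_even]
    have hp : (0:ℝ) < (ℓ:ℝ) + 1 := by positivity
    have h := div_lt_div_of_pos_left hπ hp (show ((ℓ:ℝ) + 1) < 2 * ((ℓ:ℝ) + 1) by linarith)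
    simp only [yseq]; linarith

lemma yseq_deriv (g : ℝ → ℝ)
    (heven : ∀ (ℓ : ℕ), ∀ y ∈ Set.Ico (tseq (2 * ℓ)) (tseq (2 * ℓ + 1)),
      g y = Real.cos (((ℓ : ℝ) + 1) * (y - tseq (2 * ℓ))))
    (ℓ : ℕ) : deriv g (yseq ℓ) = -((ℓ:ℝ) + 1) := by
  have hd := interior_even g heven ℓ (yseq_mem ℓ)
  have harg : ((ℓ:ℝ) + 1) * (yseq ℓ - tseq (2 * ℓ)) = Real.pi / 2 := by
    simp only [yseq]
    have : ((ℓ:ℝ) + 1) ≠ 0 := by positivity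
    field_simp
    ring
  rw [hd.deriv, harg, Real.sin_pi_div_two, mul_one]

lemma yseq_pos (ℓ : ℕ) : 0 < yseq ℓ :=
  lt_of_le_of_lt (tseq_nonneg _) (yseq_mem ℓ).1

lemma yseq_tendsto_atTop : Tendsto yseq atTop atTop := by
  have hπ := Real.pi_pos
  apply tendsto_atTop_mono (f := fun ℓ : ℕ => Real.pi * (ℓ:ℝ))
  · intro ℓ
    have h1 := harmonic_nonneg' ℓ
    have h2 : 0 < Real.pi / (2 * ((ℓ:ℝ) + 1)) := by positivity
    simp only [yseq, tseq_formula]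
    nlinarith
  · exact Tendsto.const_mul_atTop hπ tendsto_natCast_atTop_atTop

lemma key_tendsto : Tendsto (fun ℓ : ℕ => yseq ℓ / ((ℓ:ℝ) + 1)) atTop (𝓝 Real.pi) := by
  have hπ := Real.pi_pos
  have h1 : Tendsto (fun ℓ : ℕ => Real.pi * ((ℓ:ℝ) / ((ℓ:ℝ) + 1))) atTop (𝓝 (Real.pi * 1)) :=
    (tendsto_natCast_div_add_atTop (1:ℝ)).const_mul Real.pi
  have hc1 : Tendsto (fun ℓ : ℕ => 1 / ((ℓ:ℝ) + 1)) atTop (𝓝 0) :=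
    tendsto_one_div_add_atTop_nhds_zero_nat
  have hlog : Tendsto (fun ℓ : ℕ => Real.log ((ℓ:ℝ) + 1) / ((ℓ:ℝ) + 1)) atTop (𝓝 0) := by
    have h := Real.isLittleO_log_id_atTop.tendsto_div_nhds_zero
    have hn : Tendsto (fun ℓ : ℕ => (ℓ:ℝ) + 1) atTop atTop :=
      tendsto_atTop_add_const_right _ 1 tendsto_natCast_atTop_atTop
    exact h.comp hn
  have hH : Tendsto (fun ℓ : ℕ => Real.pi * (harmonic ℓ : ℝ) / ((ℓ:ℝ) + 1)) atTop (𝓝 0) := by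
    apply squeeze_zero (g := fun ℓ : ℕ => Real.pi * (1 + Real.log ((ℓ:ℝ) + 1)) / ((ℓ:ℝ) + 1))
    · intro ℓ
      have := harmonic_nonneg' ℓ
      positivity
    · intro ℓ
      have hb : (harmonic ℓ : ℝ) ≤ 1 + Real.log ((ℓ:ℝ) + 1) := by
        have hs : (harmonic ℓ : ℝ) ≤ (harmonic (ℓ + 1) : ℝ) := by
          have : (0:ℚ) ≤ (↑(ℓ+1) : ℚ)⁻¹ := by positivity
          have := harmonic_succ ℓ
          exact_mod_cast by rw [this]; linarith
        refine hs.trans ?_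
        have := harmonic_le_one_add_log (ℓ + 1)
        push_cast at this ⊢
        linarith
      gcongr
    · have heq : (fun ℓ : ℕ => Real.pi * (1 + Real.log ((ℓ:ℝ) + 1)) / ((ℓ:ℝ) + 1)) =
          fun ℓ : ℕ => Real.pi * (1 / ((ℓ:ℝ) + 1)) + Real.pi * (Real.log ((ℓ:ℝ) + 1) / ((ℓ:ℝ) + 1)) := by
        funext ℓ
        have : ((ℓ:ℝ) + 1) ≠ 0 := by positivity
        field_simp
      rw [heq]
      simpa using (hc1.const_mul Real.pi).add (hlog.const_mul Real.pi)
  have h3 : Tendsto (fun ℓ : ℕ => (Real.pi / 2) * (1 / ((ℓ:ℝ) + 1) * (1 / ((ℓ:ℝ) + 1)))) atTop (𝓝 0) := by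
    simpa using (hc1.mul hc1).const_mul (Real.pi / 2)
  have hsum := (h1.add hH).add h3
  have heq : (fun ℓ : ℕ => yseq ℓ / ((ℓ:ℝ) + 1)) =
      fun ℓ : ℕ => Real.pi * ((ℓ:ℝ) / ((ℓ:ℝ) + 1)) + Real.pi * (harmonic ℓ : ℝ) / ((ℓ:ℝ) + 1)
        + (Real.pi / 2) * (1 / ((ℓ:ℝ) + 1) * (1 / ((ℓ:ℝ) + 1))) := by
    funext ℓ
    simp only [yseq, tseq_formula]
    have : ((ℓ:ℝ) + 1) ≠ 0 := by positivity
    field_simp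
  rw [heq]
  simpa using hsum


/-- For the function `g` of Example 2.6: `liminf_{y → +∞} g'(y)/y = -1/π`. -/
theorem stmt_3 (g : ℝ → ℝ)
    (hneg : ∀ y : ℝ, y < 0 → g y = 1)
    (heven : ∀ (ℓ : ℕ), ∀ y ∈ Set.Ico (tseq (2 * ℓ)) (tseq (2 * ℓ + 1)),
      g y = Real.cos (((ℓ : ℝ) + 1) * (y - tseq (2 * ℓ))))
    (hodd : ∀ (ℓ : ℕ), ∀ y ∈ Set.Ico (tseq (2 * ℓ + 1)) (tseq (2 * ℓ + 2)),
      g y = Real.cos (y - tseq (2 * ℓ + 1) + Real.pi)) :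
    Filter.liminf (fun y : ℝ => deriv g y / y) Filter.atTop = -(1 / Real.pi) := by
  have hπ := Real.pi_pos
  set f := fun y : ℝ => deriv g y / y with hf
  have hlow : ∀ᶠ y in atTop, -(1 / Real.pi) ≤ f y :=
    eventually_atTop.mpr ⟨tseq 2, lower_bound g heven hodd⟩
  have hbdd : IsBoundedUnder (· ≥ ·) atTop f := ⟨-(1 / Real.pi), hlow⟩
  have htend : Tendsto (fun ℓ : ℕ => f (yseq ℓ)) atTop (𝓝 (-(1 / Real.pi))) := by
    have h := (key_tendsto.inv₀ (ne_of_gt hπ)).neg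
    have heq : (fun ℓ : ℕ => f (yseq ℓ)) = fun ℓ : ℕ => -((yseq ℓ / ((ℓ:ℝ) + 1))⁻¹) := by
      funext ℓ
      simp only [hf]
      rw [yseq_deriv g heven ℓ, inv_div, neg_div]
    rw [heq, show -(1 / Real.pi) = -Real.pi⁻¹ by rw [one_div]]
    exact h
  apply le_antisymm
  · refine le_of_forall_gt_imp_ge_of_dense fun c hc => ?_
    have hev : ∀ᶠ ℓ in atTop, f (yseq ℓ) < c := htend.eventually (gt_mem_nhds hc)
    have hfreq : ∃ᶠ y in atTop, f y ≤ c :=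
      yseq_tendsto_atTop.frequently ((hev.mono fun ℓ h => h.le).frequently)
    exact liminf_le_of_frequently_le hfreq hbdd
  · have hcob : IsCoboundedUnder (· ≥ ·) atTop f := by
      apply IsCoboundedUnder.of_frequently_le (a := (0:ℝ))
      have hneg' : -(1 / Real.pi) < 0 := by
        have : 0 < 1 / Real.pi := by positivity
        linarith
      have hev : ∀ᶠ ℓ in atTop, f (yseq ℓ) < 0 := htend.eventually (gt_mem_nhds hneg')
      exact yseq_tendsto_atTop.frequently ((hev.mono fun ℓ h => h.le).frequently)
    exact le_liminf_of_le hcob hlow
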